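/- The total order on Φ_n^+ induced by a reduced expression of w_0 is convex: if α, β, α+β are all positive roots and α < β in this order, then α < α+β < β. -/

import Mathlib

/-!
Write `σ_t = s_{i_1} ⋯ s_{i_t}` and record an inversion of a permutation as the positive root
`e_p - e_q` that it sends to a negative root. Multiplying `σ_{t-1}` on the right by `s_{i_t}`
adds at most one inversion, namely `β_t = σ_{t-1}(α_{i_t})`. Since `w_0` inverts all `N` positive
roots, every letter must add its root, so the inversion set of `σ_t` is exactly `{β_u | u ≤ t}`.
Inversion sets are closed (`β_x, β_y` inverted implies `β_x + β_y` inverted) and coclosed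
(`β_x + β_y` inverted implies `β_x` or `β_y` inverted); applied to `σ_{max(x,y)}` and `σ_z`
this places `z` strictly between `x` and `y`.
-/

/-- The set of positive roots of type `A_n`, realized as vectors `e_i - e_j`
(`i < j`) in `ℤ^{n+1}`. -/
def PosRootA (n : ℕ) : Set (Fin (n + 1) → ℤ) :=
  {v | ∃ i j : Fin (n + 1), i < j ∧ v = Pi.single i 1 - Pi.single j 1}

/-- The `k`-th simple root `α_k = e_k - e_{k+1}` of type `A_n`. -/
def simpleA (n : ℕ) (k : Fin n) : Fin (n + 1) → ℤ :=
  Pi.single k.castSucc 1 - Pi.single k.succ 1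

/-- The `k`-th simple reflection of the Weyl group `S_{n+1}` of type `A_n`. -/
def sA (n : ℕ) (k : Fin n) : Equiv.Perm (Fin (n + 1)) := Equiv.swap k.castSucc k.succ

/-- The natural action of the Weyl group `S_{n+1}` on root vectors. -/
def permAct (n : ℕ) (w : Equiv.Perm (Fin (n + 1))) (v : Fin (n + 1) → ℤ) :
    Fin (n + 1) → ℤ :=
  v ∘ w.symm

open Finset Equiv

def rootA {ι : Type*} [DecidableEq ι] (p q : ι) : ι → ℤ := Pi.single p 1 - Pi.single q 1

section Roots

variable {ι : Type*} [DecidableEq ι]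

theorem rootA_apply (p q j : ι) :
    rootA p q j = (if j = p then 1 else 0) - (if j = q then 1 else 0) := by
  simp [rootA, Pi.single_apply]

theorem rootA_inj {a b c d : ι} (hab : a ≠ b) (h : rootA a b = rootA c d) : a = c ∧ b = d := by
  have ha := congrFun h a
  have hb := congrFun h b
  simp only [rootA_apply, if_neg hab, if_neg hab.symm] at ha hb
  constructor <;> by_contra hne <;> split_ifs at ha hb <;> simp_all

theorem rootA_add_rootA_eq {a b c d p q : ι} (hab : a ≠ b) (hcd : c ≠ d) (hpq : p ≠ q)
    (h : rootA a b + rootA c d = rootA p q) :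
    (p = a ∧ b = c ∧ d = q) ∨ (p = c ∧ d = a ∧ b = q) := by
  have hp : p = a ∨ p = c := by
    have := congrFun h p
    by_contra! hp
    simp only [Pi.add_apply, rootA_apply, if_neg hp.1, if_neg hp.2, if_neg hpq] at this
    split_ifs at this <;> omega
  have hsub : ∀ {r s t : ι}, rootA r t - rootA r s = rootA s t := by
    intro r s t
    simp only [rootA]
    abel
  rcases hp with rfl | rfl
  · obtain ⟨hc, hd⟩ := rootA_inj (c := b) (d := q) hcd
      (by rw [← hsub (r := p) (s := b), ← h, add_sub_cancel_left])
    exact Or.inl ⟨rfl, hc.symm, hd⟩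
  · obtain ⟨ha, hb⟩ := rootA_inj (c := d) (d := q) hab
      (by rw [← hsub (r := p) (s := d), ← h, add_sub_cancel_right])
    exact Or.inr ⟨rfl, ha.symm, hb⟩

end Roots

section Chain

variable {α : Type*} [DecidableEq α] {I : ℕ → Finset α} {N : ℕ} {P : Fin N → α}

theorem Finset.card_le_card_add_of_subset_insert
    (hstep : ∀ t : Fin N, I (t + 1) ⊆ insert (P t) (I t)) {s t : ℕ} (hts : t ≤ s)
    (hs : s ≤ N) :
    #(I s) ≤ #(I t) + (s - t) := by
  induction s, hts using Nat.le_induction with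
  | base => simp
  | succ s hts ih =>
    have hsucc : #(I (s + 1)) ≤ #(I s) + 1 :=
      (card_le_card (hstep ⟨s, hs⟩)).trans (card_insert_le _ _)
    have := ih (by omega)
    omega

theorem Finset.eq_insert_of_subset_insert (h0 : I 0 = ∅)
    (hstep : ∀ t : Fin N, I (t + 1) ⊆ insert (P t) (I t)) (hN : N ≤ #(I N)) (t : Fin N) :
    I (t + 1) = insert (P t) (I t) ∧ P t ∉ I t := by
  have hcard : ∀ s ≤ N, #(I s) = s := fun s hs => by
    have h1 := card_le_card_add_of_subset_insert hstep (Nat.zero_le s) hs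
    have h2 := card_le_card_add_of_subset_insert hstep hs le_rfl
    simp only [h0, card_empty] at h1
    omega
  have hnot : P t ∉ I t := fun hmem => by
    have := card_le_card (hstep t)
    rw [insert_eq_of_mem hmem, hcard _ t.2, hcard _ t.2.le] at this
    omega
  refine ⟨eq_of_subset_of_card_le (hstep t) ?_, hnot⟩
  rw [card_insert_of_notMem hnot, hcard _ t.2, hcard _ t.2.le]

theorem Finset.mem_iff_lt_of_subset_insert (h0 : I 0 = ∅)
    (hstep : ∀ t : Fin N, I (t + 1) ⊆ insert (P t) (I t)) (hN : N ≤ #(I N)) (u : Fin N)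
    {t : ℕ} (ht : t ≤ N) : P u ∈ I t ↔ u < t := by
  have hstep' := eq_insert_of_subset_insert h0 hstep hN
  have hmono : ∀ {r s : ℕ}, r ≤ s → s ≤ N → I r ⊆ I s := fun {r s} hrs hsN => by
    induction s, hrs using Nat.le_induction with
    | base => rfl
    | succ s hrs ih =>
      rw [(hstep' ⟨s, hsN⟩).1]
      exact (ih (by omega)).trans (subset_insert _ _)
  constructor
  · intro hu
    by_contra! htu
    exact (hstep' u).2 (hmono htu u.2.le hu)
  · intro hu
    exact hmono hu ht (by simp [(hstep' u).1])

end Chain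

namespace Equiv.Perm

variable {α : Type*} [LinearOrder α]

theorem eq_of_lt_of_swap_lt_swap {u v a b : α} (huv : u ⋖ v) (hab : a < b)
    (hba : swap u v b < swap u v a) : a = u ∧ b = v := by
  have := huv.1
  have := huv.2
  rw [swap_apply_def, swap_apply_def] at hba
  split_ifs at hba <;> subst_vars <;> grind

variable [Fintype α]

/-- `(p, q)` stands for the root `e_p - e_q`; it is an inversion when `σ⁻¹` makes it
negative. -/
def inversions (σ : Perm α) : Finset (α × α) :=
  {pq | pq.1 < pq.2 ∧ σ⁻¹ pq.2 < σ⁻¹ pq.1}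

@[simp]
theorem mem_inversions {σ : Perm α} {p q : α} :
    (p, q) ∈ inversions σ ↔ p < q ∧ σ⁻¹ q < σ⁻¹ p := by
  simp [inversions]

@[simp]
theorem inversions_one : inversions (1 : Perm α) = ∅ := by
  ext ⟨p, q⟩
  simp only [mem_inversions, inv_one, Perm.one_apply, notMem_empty, iff_false, not_and]
  exact lt_asymm

theorem inversions_mul_swap_subset (σ : Perm α) {u v : α} (huv : u ⋖ v) :
    inversions (σ * swap u v) ⊆ insert (σ u, σ v) (inversions σ) := by
  rintro ⟨p, q⟩ hpq
  rw [mem_inversions, mul_inv_rev, swap_inv, Perm.mul_apply, Perm.mul_apply] at hpq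
  rw [mem_insert, mem_inversions]
  rcases lt_or_gt_of_ne (σ⁻¹.injective.ne hpq.1.ne) with h | h
  · obtain ⟨hp, hq⟩ := eq_of_lt_of_swap_lt_swap huv h hpq.2
    left
    simp [← hp, ← hq]
  · exact Or.inr ⟨hpq.1, h⟩

theorem mem_inversions_trans {σ : Perm α} {p q r : α} (hpq : (p, q) ∈ inversions σ)
    (hqr : (q, r) ∈ inversions σ) : (p, r) ∈ inversions σ := by
  simp only [mem_inversions] at *
  exact ⟨hpq.1.trans hqr.1, hqr.2.trans hpq.2⟩

theorem mem_inversions_or_mem_inversions {σ : Perm α} {p q r : α}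
    (hpr : (p, r) ∈ inversions σ) (hpq : p < q) (hqr : q < r) :
    (p, q) ∈ inversions σ ∨ (q, r) ∈ inversions σ := by
  simp only [mem_inversions] at *
  rcases lt_or_ge (σ⁻¹ q) (σ⁻¹ p) with h | h
  · exact Or.inl ⟨hpq, h⟩
  · exact Or.inr ⟨hqr, hpr.2.trans_le h⟩

theorem between_of_mem_inversions_iff {σ : ℕ → Perm α} {N : ℕ} {β : Fin N → α × α}
    (hβ : ∀ (u : Fin N) (t : ℕ), t ≤ N → (β u ∈ inversions (σ t) ↔ u < t))
    {x y z : Fin N} {a b d : α} (hx : β x = (a, b)) (hy : β y = (b, d)) (hz : β z = (a, d)) :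
    (x < z ∧ z < y) ∨ (y < z ∧ z < x) := by
  have hself : ∀ u : Fin N, β u ∈ inversions (σ (u + 1)) := fun u =>
    (hβ u _ u.2).2 (lt_add_one _)
  have hab : a < b := (mem_inversions.1 (hx ▸ hself x)).1
  have hbd : b < d := (mem_inversions.1 (hy ▸ hself y)).1
  have hxz : x ≠ z := by
    rintro rfl
    exact hbd.ne (Prod.ext_iff.1 (hx.symm.trans hz)).2
  have hyz : y ≠ z := by
    rintro rfl
    exact hab.ne (Prod.ext_iff.1 (hy.symm.trans hz)).1.symm
  have hz_le : (z : ℕ) ≤ max (x : ℕ) y := by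
    have hmem :
        ∀ u : Fin N, u ≤ max (x : ℕ) y → β u ∈ inversions (σ (max (x : ℕ) y + 1)) :=
      fun u hu => (hβ u _ (by omega)).2 (by omega)
    have := mem_inversions_trans (hx ▸ hmem x (by omega)) (hy ▸ hmem y (by omega))
    have := (hβ z _ (by omega)).1 (hz ▸ this)
    omega
  have hz_ge : x ≤ z ∨ y ≤ z := by
    have := mem_inversions_or_mem_inversions (hz ▸ hself z) hab hbd
    rw [← hx, ← hy, hβ x _ z.2, hβ y _ z.2] at this
    omega
  omega

end Equiv.Perm

theorem Fin.castSucc_covBy_succ {n : ℕ} (k : Fin n) : k.castSucc ⋖ k.succ :=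
  ⟨Fin.castSucc_lt_succ, fun _ h1 h2 => (Fin.castSucc_lt_iff_succ_le.1 h1).not_gt h2⟩

theorem Fin.inversions_revPerm (m : ℕ) :
    Perm.inversions (Fin.revPerm : Perm (Fin m)) =
      ({pq | pq.1 < pq.2} : Finset (Fin m × Fin m)) := by
  ext ⟨p, q⟩
  simp [Fin.revPerm_symm]

theorem Fin.card_inversions_revPerm (m : ℕ) :
    #(Perm.inversions (Fin.revPerm : Perm (Fin (m + 1)))) = m * (m + 1) / 2 := by
  rw [Fin.inversions_revPerm, Fintype.card_product_filter_lt, Fintype.card_fin,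
    Nat.choose_two_right, Nat.add_sub_cancel, mul_comm]

section ReducedWord

variable {n N : ℕ} (c : Fin N → Fin n)

def wordPrefix (t : ℕ) : Perm (Fin (n + 1)) := ((List.ofFn fun s => sA n (c s)).take t).prod

/-- The pair `(p, q)` with `β_{u+1} = e_p - e_q` (letters are indexed from `0`). -/
def wordRoot (u : Fin N) : Fin (n + 1) × Fin (n + 1) :=
  (wordPrefix c u (c u).castSucc, wordPrefix c u (c u).succ)

theorem wordPrefix_succ (t : Fin N) : wordPrefix c (t + 1) = wordPrefix c t * sA n (c t) := by
  rw [wordPrefix, List.prod_take_succ _ _ (by simp), List.getElem_ofFn]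
  rfl

theorem wordPrefix_length : wordPrefix c N = (List.ofFn fun s => sA n (c s)).prod := by
  rw [wordPrefix, List.take_of_length_le (by simp)]

theorem inversions_wordPrefix_succ_subset (t : Fin N) :
    Perm.inversions (wordPrefix c (t + 1)) ⊆
      insert (wordRoot c t) (Perm.inversions (wordPrefix c t)) := by
  rw [wordPrefix_succ]
  exact Perm.inversions_mul_swap_subset _ (Fin.castSucc_covBy_succ _)

theorem mem_inversions_wordPrefix_iff (hred : N ≤ #(Perm.inversions (wordPrefix c N)))
    (u : Fin N) {t : ℕ} (ht : t ≤ N) :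
    wordRoot c u ∈ Perm.inversions (wordPrefix c t) ↔ u < t :=
  Finset.mem_iff_lt_of_subset_insert (I := fun t => Perm.inversions (wordPrefix c t))
    (by simp [wordPrefix]) (inversions_wordPrefix_succ_subset c) hred u ht

end ReducedWord

theorem permAct_rootA (n : ℕ) (σ : Perm (Fin (n + 1))) (u v : Fin (n + 1)) :
    permAct n σ (rootA u v) = rootA (σ u) (σ v) := by
  ext j
  simp only [permAct, Function.comp_apply, rootA_apply, Equiv.symm_apply_eq]

/-- The total order on positive roots induced by a reduced expression of the
longest element (via `β_z := s_{i_1} ⋯ s_{i_{z-1}}(α_{i_z})`) is convex: if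
`β_x + β_y = β_z` and `x < y`, then `x < z < y`. -/
theorem reduced_word_order_is_convex (n N : ℕ) (hN : N = n * (n + 1) / 2)
    (i : Fin N → Fin n)
    (hred : (List.ofFn fun t => sA n (i t)).prod =
      (Fin.revPerm : Equiv.Perm (Fin (n + 1)))) :
    let f : Fin N → (Fin (n + 1) → ℤ) := fun z =>
      permAct n (((List.ofFn fun t => sA n (i t)).take z.val).prod) (simpleA n (i z))
    ∀ x y z : Fin N, f x + f y = f z → x < y → x < z ∧ z < y := by
  intro f x y z hsum hxy
  have hmem := mem_inversions_wordPrefix_iff i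
    (by rw [wordPrefix_length, hred, Fin.card_inversions_revPerm, hN])
  have hne : ∀ u, (wordRoot i u).1 ≠ (wordRoot i u).2 := fun u =>
    (Perm.mem_inversions.1 ((hmem u u.2).2 (lt_add_one _))).1.ne
  have hf : ∀ u, f u = rootA (wordRoot i u).1 (wordRoot i u).2 := fun _ => permAct_rootA _ _ _ _
  rw [hf, hf, hf] at hsum
  rcases rootA_add_rootA_eq (hne x) (hne y) (hne z) hsum with ⟨h1, h2, h3⟩ | ⟨h1, h2, h3⟩
  · have := Perm.between_of_mem_inversions_iff hmem (x := x) (y := y) (z := z) rfl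
      (Prod.ext h2.symm rfl) (Prod.ext h1 h3.symm)
    omega
  · have := Perm.between_of_mem_inversions_iff hmem (x := y) (y := x) (z := z) rfl
      (Prod.ext h2.symm rfl) (Prod.ext h1 h3.symm)
    omega
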